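/- arXiv:2103.08918 — 6 statements merged into one kernel-verified Lean document; each statement's English description precedes it below -/
import Mathlib

section
/- For 0 < μ < λ and 0 < α < 1, the derivative at s = 0 of M_{A₀}(s) = 2αλ / (2λ(α-1) + (λ+μ-2s) + √((λ+μ-2s)²-4λμ)) equals 2/(α(λ-μ)); i.e., the mean absorption time from the origin is E[A₀] = 2/(α(λ-μ)). -/
/-! At `s = 0` the discriminant `(λ + μ)² - 4λμ` is the perfect square `(λ - μ)²`, so the
denominator of `M_{A₀}` equals `2αλ` there and its derivative is `-2 - 2(λ + μ)/(λ - μ) = -4λ/(λ - μ)`;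
the quotient rule then gives `2αλ · 4λ / ((λ - μ) (2αλ)²) = 2/(α(λ - μ))`. -/

open Real

theorem hasDerivAt_sqrt_sq_sub_two_mul {a b s : ℝ} (h : (a - 2 * s) ^ 2 - b ≠ 0) :
    HasDerivAt (fun t => √((a - 2 * t) ^ 2 - b))
      (-2 * (a - 2 * s) / √((a - 2 * s) ^ 2 - b)) s := by
  have hlin : HasDerivAt (fun t => a - 2 * t) (-2) s := by
    simpa using ((hasDerivAt_id s).const_mul 2).const_sub a
  refine (((hlin.fun_pow 2).sub_const b).sqrt h).congr_deriv ?_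
  field_simp
  ring

theorem sqrt_discriminant_at_zero {lam mu : ℝ} (hlam : mu < lam) :
    √((lam + mu - 2 * 0) ^ 2 - 4 * lam * mu) = lam - mu := by
  rw [show (lam + mu - 2 * 0) ^ 2 - 4 * lam * mu = (lam - mu) ^ 2 by ring]
  exact sqrt_sq (sub_nonneg.mpr hlam.le)

theorem hasDerivAt_mgf_denominator_at_zero (c : ℝ) {lam mu : ℝ} (hlam : mu < lam) :
    HasDerivAt (fun s => c + (lam + mu - 2 * s) + √((lam + mu - 2 * s) ^ 2 - 4 * lam * mu))
      (-4 * lam / (lam - mu)) 0 := by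
  have hpos : 0 < lam - mu := sub_pos.mpr hlam
  have hsqrt := sqrt_discriminant_at_zero hlam
  have hne : (lam + mu - 2 * 0) ^ 2 - 4 * lam * mu ≠ 0 := by
    intro h
    rw [h, sqrt_zero] at hsqrt
    exact hpos.ne hsqrt
  have hlin : HasDerivAt (fun s : ℝ => c + (lam + mu - 2 * s)) (-2) 0 := by
    simpa using (((hasDerivAt_id (0 : ℝ)).const_mul 2).const_sub (lam + mu)).const_add c
  refine (hlin.fun_add (hasDerivAt_sqrt_sq_sub_two_mul hne)).congr_deriv ?_
  rw [hsqrt]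
  field_simp
  ring

theorem stmt_6_general (lam mu α : ℝ) (hmu : 0 < mu) (hlam : mu < lam)
    (hα0 : 0 < α) :
    deriv (fun s : ℝ => 2*α*lam /
      (2*lam*(α-1) + (lam + mu - 2*s) + Real.sqrt ((lam + mu - 2*s)^2 - 4*lam*mu))) 0
      = 2 / (α * (lam - mu)) := by
  have hlam0 : 0 < lam := hmu.trans hlam
  have hpos : 0 < lam - mu := sub_pos.mpr hlam
  have hD := hasDerivAt_mgf_denominator_at_zero (2 * lam * (α - 1)) hlam
  have hD0 : 2 * lam * (α - 1) + (lam + mu - 2 * 0) + √((lam + mu - 2 * 0) ^ 2 - 4 * lam * mu)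
      = 2 * lam * α := by
    rw [sqrt_discriminant_at_zero hlam]
    ring
  rw [((hasDerivAt_const (0 : ℝ) (2 * α * lam)).fun_div hD (by rw [hD0]; positivity)).deriv, hD0]
  field_simp
  ring

/-- The derivative at `0` of the MGF of the absorption time `A₀` equals `2/(α(λ-μ))`,
i.e. `E[A₀] = 2/(α(λ-μ))`. -/
theorem stmt_6 (lam mu α : ℝ) (hmu : 0 < mu) (hlam : mu < lam)
    (hα0 : 0 < α) (hα1 : α < 1) :
    deriv (fun s : ℝ => 2*α*lam /
      (2*lam*(α-1) + (lam + mu - 2*s) + Real.sqrt ((lam + mu - 2*s)^2 - 4*lam*mu))) 0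
      = 2 / (α * (lam - mu)) :=
  stmt_6_general lam mu α hmu hlam hα0
end

section
/- For 0 < μ < λ and 0 < α < 1, the variance of the absorption time A₀, computed from its MGF M_{A₀}(s) = 2αλ/(2λ(α-1)+(λ+μ-2s)+√((λ+μ-2s)²-4λμ)) via Var = M''(0) - M'(0)², equals 4(λ + μ(2α-1))/(α²(λ-μ)³). -/
/-!
The MGF has the form `M = c / D` with `D 0 = c`, so `M''(0) - M'(0)²` is the second derivative
of `log M = log c - log D` at `0`, namely `(D'(0)² - c D''(0)) / c²`. For
`D s = a + u + √(u² - κ)` with `u = λ + μ - 2s` and `κ = 4λμ`, the square root equals `λ - μ` at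
`0`, and `D'(0) = -4λ / (λ - μ)`, `D''(0) = -4κ / (λ - μ)³`.
-/

open Real Filter Topology

theorem deriv_deriv_const_div_sub_sq {D D' : ℝ → ℝ} {D'' c x : ℝ}
    (hD : ∀ᶠ y in 𝓝 x, HasDerivAt D (D' y) y) (hD' : HasDerivAt D' D'' x)
    (hDx : D x = c) (hc : c ≠ 0) :
    deriv (deriv fun y => c / D y) x - (deriv (fun y => c / D y) x) ^ 2
      = (D' x ^ 2 - c * D'') / c ^ 2 := by
  have hDx' : HasDerivAt D (D' x) x := hD.self_of_nhds
  have hne : ∀ᶠ y in 𝓝 x, D y ≠ 0 := hDx'.continuousAt.eventually_ne (hDx ▸ hc)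
  have hderiv : deriv (fun y => c / D y) =ᶠ[𝓝 x] fun y => -c * D' y / D y ^ 2 := by
    filter_upwards [hD, hne] with y hy hy0
    convert ((hasDerivAt_const y c).fun_div hy hy0).deriv using 1
    ring
  rw [hderiv.deriv_eq, hderiv.eq_of_nhds,
    ((hD'.const_mul (-c)).fun_div (hDx'.fun_pow 2) (pow_ne_zero 2 (hDx ▸ hc))).deriv, hDx]
  field_simp
  ring

theorem hasDerivAt_sqrt_sq_sub {κ t : ℝ} (ht : κ < t ^ 2) :
    HasDerivAt (fun t => √(t ^ 2 - κ)) (t / √(t ^ 2 - κ)) t := by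
  convert ((hasDerivAt_pow 2 t).sub_const κ).sqrt (sub_pos.2 ht).ne' using 1
  push_cast
  ring

theorem hasDerivAt_div_sqrt_sq_sub {κ t : ℝ} (ht : κ < t ^ 2) :
    HasDerivAt (fun t => t / √(t ^ 2 - κ)) (-κ / √(t ^ 2 - κ) ^ 3) t := by
  have hq : 0 < √(t ^ 2 - κ) := sqrt_pos.2 (sub_pos.2 ht)
  have hsq : √(t ^ 2 - κ) ^ 2 = t ^ 2 - κ := sq_sqrt (sub_pos.2 ht).le
  refine ((hasDerivAt_id' t).fun_div (hasDerivAt_sqrt_sq_sub ht) hq.ne').congr_deriv ?_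
  field_simp
  linear_combination hsq

theorem hasDerivAt_add_sqrt_sq_sub_affine {a b κ s : ℝ} (hs : κ < (b - 2 * s) ^ 2) :
    HasDerivAt (fun s => a + (b - 2 * s) + √((b - 2 * s) ^ 2 - κ))
      (-2 - 2 * ((b - 2 * s) / √((b - 2 * s) ^ 2 - κ))) s := by
  have hu : HasDerivAt (fun s => b - 2 * s) (-2) s := by
    simpa using ((hasDerivAt_id' s).const_mul 2).const_sub b
  have hq := (hasDerivAt_sqrt_sq_sub hs).comp s hu
  refine ((hu.const_add a).add hq).congr_deriv ?_
  ring

theorem hasDerivAt_deriv_add_sqrt_sq_sub_affine {b κ s : ℝ} (hs : κ < (b - 2 * s) ^ 2) :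
    HasDerivAt (fun s => -2 - 2 * ((b - 2 * s) / √((b - 2 * s) ^ 2 - κ)))
      (-4 * κ / √((b - 2 * s) ^ 2 - κ) ^ 3) s := by
  have hu : HasDerivAt (fun s => b - 2 * s) (-2) s := by
    simpa using ((hasDerivAt_id' s).const_mul 2).const_sub b
  have hφ := (hasDerivAt_div_sqrt_sq_sub hs).comp s hu
  refine ((hφ.const_mul 2).const_sub (-2)).congr_deriv ?_
  ring

theorem stmt_7_general (lam mu α : ℝ) (hmu : 0 < mu) (hlam : mu < lam)
    (hα0 : 0 < α)
    (MA0 : ℝ → ℝ)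
    (hMA0 : ∀ s, MA0 s = 2*α*lam /
      (2*lam*(α-1) + (lam + mu - 2*s) + Real.sqrt ((lam + mu - 2*s)^2 - 4*lam*mu))) :
    deriv (deriv MA0) 0 - (deriv MA0 0)^2
      = 4*(lam + mu*(2*α - 1)) / (α^2 * (lam - mu)^3) := by
  obtain rfl : MA0 = _ := funext hMA0
  have hlam0 : 0 < lam := hmu.trans hlam
  have hlm : lam - mu ≠ 0 := by linarith
  have hdisc : (lam + mu - 2 * 0) ^ 2 - 4 * lam * mu = (lam - mu) ^ 2 := by ring
  have hsqrt : √((lam + mu - 2 * 0) ^ 2 - 4 * lam * mu) = lam - mu := by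
    rw [hdisc, sqrt_sq (by linarith)]
  have hpos : ∀ᶠ s in 𝓝 (0 : ℝ), 4 * lam * mu < (lam + mu - 2 * s) ^ 2 := by
    refine (continuous_const.continuousAt).eventually_lt (by fun_prop) ?_
    nlinarith
  rw [deriv_deriv_const_div_sub_sq (hpos.mono fun s hs => hasDerivAt_add_sqrt_sq_sub_affine hs)
    (hasDerivAt_deriv_add_sqrt_sq_sub_affine hpos.self_of_nhds) (by rw [hsqrt]; ring)
    (by positivity), hsqrt]
  field_simp
  ring

/-- The variance of `A₀`, computed as `M''(0) - M'(0)²` from its MGF,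
equals `4(λ + μ(2α-1))/(α²(λ-μ)³)`. -/
theorem stmt_7 (lam mu α : ℝ) (hmu : 0 < mu) (hlam : mu < lam)
    (hα0 : 0 < α) (hα1 : α < 1)
    (MA0 : ℝ → ℝ)
    (hMA0 : ∀ s, MA0 s = 2*α*lam /
      (2*lam*(α-1) + (lam + mu - 2*s) + Real.sqrt ((lam + mu - 2*s)^2 - 4*lam*mu))) :
    deriv (deriv MA0) 0 - (deriv MA0 0)^2
      = 4*(lam + mu*(2*α - 1)) / (α^2 * (lam - mu)^3) :=
  stmt_7_general lam mu α hmu hlam hα0 MA0 hMA0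
end

section
/- For 0 < μ < λ and s < (√λ-√μ)²/2, the Laplace-type integral √(λ/μ) ∫₀^∞ (e^{-((λ+μ)/2 - s)y}/y) I₁(y√(λμ)) dy equals ((λ+μ-2s) - √((λ+μ-2s)² - 4λμ))/(2μ), where I₁ is the modified Bessel function of the first kind. -/
/-!
With `a = (λ + μ)/2 - s` and `b = √(λμ)`, the hypothesis on `s` says exactly `b < a`.
Expanding `I₁(by)/y` in powers of `y` and integrating term by term against `e^{-ay}`, using
`∫₀^∞ y^{2k} e^{-ay} dy = (2k)!/a^{2k+1}` and `(2k)! = Cₖ k! (k+1)!`, turns the integral into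
`(b/2a) ∑ Cₖ xᵏ` with `Cₖ` the Catalan numbers and `x = b²/4a² < 1/4`. The Catalan generating
function `(1 - √(1 - 4x))/(2x)` is read off the binomial series of `(1 - 4x)^{1/2}`, whose
coefficients are `-2 Cₙ` from the second one on.
-/

open MeasureTheory

/-- The modified Bessel function of the first kind `I₁`. -/
noncomputable def besselI1 (z : ℝ) : ℝ :=
  (z / 2) * ∑' k : ℕ, (z ^ 2 / 4) ^ k / (Nat.factorial k * Nat.factorial (k + 1))

open Real Nat Set Finset

theorem succ_succ_mul_catalan_succ (n : ℕ) :
    (n + 2) * catalan (n + 1) = 2 * (2 * n + 1) * catalan n := by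
  have h := Nat.succ_mul_centralBinom_succ n
  rw [← succ_mul_catalan_eq_centralBinom, ← succ_mul_catalan_eq_centralBinom] at h
  refine Nat.eq_of_mul_eq_mul_left n.succ_pos ?_
  linarith

theorem catalan_mul_factorial_mul_factorial_succ (n : ℕ) :
    catalan n * n ! * (n + 1)! = (2 * n)! := by
  rw [factorial_succ, ← Nat.choose_mul_factorial_mul_factorial (by omega : n ≤ 2 * n),
    show 2 * n - n = n by omega, ← centralBinom_eq_two_mul_choose,
    ← succ_mul_catalan_eq_centralBinom]
  ring

theorem Ring.succ_mul_choose_succ {R : Type*} [NonAssocRing R] [Pow R ℕ] [NatPowAssoc R]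
    [BinomialRing R] (r : R) (n : ℕ) :
    (n + 1 : R) * Ring.choose r (n + 1) = Ring.choose r n * (r - n) := by
  have h := Ring.choose_smul_choose r (Nat.le_succ n)
  rw [Nat.choose_succ_self_right, show n.succ - n = 1 by omega, Ring.choose_one_right,
    nsmul_eq_mul] at h
  exact_mod_cast h

theorem choose_half_succ_mul_neg_four_pow (n : ℕ) :
    Ring.choose (1 / 2 : ℝ) (n + 1) * (-4) ^ (n + 1) = -2 * catalan n := by
  induction n with
  | zero => norm_num [Ring.choose_one_right]
  | succ n ih =>
    have hc : ((n + 2 : ℕ) : ℝ) * catalan (n + 1) = 2 * (2 * n + 1) * catalan n := by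
      exact_mod_cast succ_succ_mul_catalan_succ n
    have hr := Ring.succ_mul_choose_succ (1 / 2 : ℝ) (n + 1)
    refine mul_left_cancel₀ (show ((n + 2 : ℕ) : ℝ) ≠ 0 by positivity) ?_
    push_cast at hc hr ⊢
    linear_combination (-4 : ℝ) ^ (n + 2) * hr + (-4) * (1 / 2 - (n + 1 : ℝ)) * ih + 2 * hc

theorem hasSum_catalan_mul_pow_succ {x : ℝ} (hx : |x| < 1 / 4) :
    HasSum (fun n => (catalan n : ℝ) * x ^ (n + 1)) ((1 - √(1 - 4 * x)) / 2) := by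
  have hball : -4 * x ∈ Metric.eball (0 : ℝ) (1 : NNReal) := by
    rw [Metric.eball_coe, mem_ball_zero_iff, Real.norm_eq_abs, abs_mul]
    norm_num
    linarith
  have h := (one_add_rpow_hasFPowerSeriesOnBall_zero (a := 1 / 2)).hasSum hball
  rw [← hasSum_nat_add_iff' 1] at h
  simp only [binomialSeries_apply, List.ofFn_const, List.prod_replicate, smul_eq_mul, zero_add,
    ← sqrt_eq_rpow] at h
  simp only [mul_pow, ← mul_assoc, choose_half_succ_mul_neg_four_pow, sum_range_one,
    Ring.choose_zero_right, pow_zero, mul_one] at h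
  rw [neg_mul, ← sub_eq_add_neg] at h
  have hterm : (fun n => (catalan n : ℝ) * x ^ (n + 1))
      = fun n => -(1 / 2) * (-2 * catalan n * x ^ (n + 1)) := by
    funext n
    ring
  rw [hterm, show (1 - √(1 - 4 * x)) / 2 = -(1 / 2) * (√(1 - 4 * x) - 1) by ring]
  exact h.mul_left _

theorem hasSum_catalan_mul_pow {x : ℝ} (hx0 : x ≠ 0) (hx : |x| < 1 / 4) :
    HasSum (fun n => (catalan n : ℝ) * x ^ n) ((1 - √(1 - 4 * x)) / (2 * x)) := by
  have h := (hasSum_catalan_mul_pow_succ hx).div_const x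
  simpa only [pow_succ, ← mul_assoc, mul_div_cancel_right₀ _ hx0, div_div] using h

theorem integrableOn_pow_mul_exp_neg_mul_Ioi (n : ℕ) {a : ℝ} (ha : 0 < a) :
    IntegrableOn (fun y : ℝ => y ^ n * exp (-(a * y))) (Ioi 0) := by
  refine (integrableOn_rpow_mul_exp_neg_mul_rpow (s := n) (by linarith [n.cast_nonneg (α := ℝ)])
    one_pos ha).congr_fun (fun y _ => ?_) measurableSet_Ioi
  simp only [rpow_one, rpow_natCast, neg_mul]

theorem integral_pow_mul_exp_neg_mul_Ioi (n : ℕ) {a : ℝ} (ha : 0 < a) :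
    ∫ y in Ioi (0 : ℝ), y ^ n * exp (-(a * y)) = n ! / a ^ (n + 1) := by
  have h := integral_rpow_mul_exp_neg_mul_Ioi (a := n + 1) (by positivity) ha
  simp only [add_sub_cancel_right, rpow_natCast, Gamma_nat_eq_factorial] at h
  rw [h, ← Nat.cast_add_one, rpow_natCast, one_div_pow, one_div_mul_eq_div]

noncomputable def besselI1Coeff (b : ℝ) (k : ℕ) : ℝ :=
  b / 2 * (b ^ 2 / 4) ^ k / (k ! * (k + 1)!)

theorem besselI1_mul_div (b : ℝ) {y : ℝ} (hy : y ≠ 0) :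
    besselI1 (y * b) / y = ∑' k : ℕ, besselI1Coeff b k * y ^ (2 * k) := by
  simp only [besselI1, besselI1Coeff]
  rw [← tsum_mul_left, ← tsum_div_const]
  refine tsum_congr fun k => ?_
  rw [show (y * b) ^ 2 / 4 = b ^ 2 / 4 * y ^ 2 by ring, mul_pow, ← pow_mul]
  field_simp

theorem integral_besselI1Coeff_mul_pow_mul_exp (b : ℝ) {a : ℝ} (ha : 0 < a) (k : ℕ) :
    ∫ y in Ioi (0 : ℝ), besselI1Coeff b k * (y ^ (2 * k) * exp (-(a * y)))
      = b / (2 * a) * (catalan k * (b ^ 2 / (4 * a ^ 2)) ^ k) := by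
  have hfact : ((2 * k)! : ℝ) = catalan k * k ! * (k + 1)! := by
    exact_mod_cast (catalan_mul_factorial_mul_factorial_succ k).symm
  rw [integral_const_mul, integral_pow_mul_exp_neg_mul_Ioi _ ha, hfact, besselI1Coeff,
    pow_succ a, pow_mul a, div_pow, div_pow, mul_pow]
  field_simp

theorem integral_exp_neg_mul_div_mul_besselI1 {a b : ℝ} (hb : 0 < b) (hba : b < a) :
    ∫ y in Ioi (0 : ℝ), exp (-a * y) / y * besselI1 (y * b) = (a - √(a ^ 2 - b ^ 2)) / b := by
  have ha : 0 < a := hb.trans hba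
  set x := b ^ 2 / (4 * a ^ 2) with hx_def
  have hx0 : 0 < x := by positivity
  have hx : |x| < 1 / 4 := by
    rw [abs_of_pos hx0, hx_def, div_lt_iff₀ (by positivity)]
    nlinarith
  set F : ℕ → ℝ → ℝ := fun k y => besselI1Coeff b k * (y ^ (2 * k) * exp (-(a * y))) with hF
  have hF_nonneg : ∀ k y, 0 ≤ F k y := fun k y =>
    mul_nonneg (by unfold besselI1Coeff; positivity)
      (mul_nonneg ((even_two_mul k).pow_nonneg y) (exp_pos _).le)
  have hF_int : ∀ k, IntegrableOn (F k) (Ioi 0) := fun k =>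
    (integrableOn_pow_mul_exp_neg_mul_Ioi _ ha).const_mul _
  have hF_sum : HasSum (fun k => ∫ y in Ioi 0, F k y)
      (b / (2 * a) * ((1 - √(1 - 4 * x)) / (2 * x))) := by
    simp only [hF, integral_besselI1Coeff_mul_pow_mul_exp b ha]
    exact (hasSum_catalan_mul_pow hx0.ne' hx).mul_left _
  have hF_norm : (fun k => ∫ y in Ioi 0, ‖F k y‖) = fun k => ∫ y in Ioi 0, F k y := by
    simp only [Real.norm_of_nonneg (hF_nonneg _ _)]
  have hint := hasSum_integral_of_summable_integral_norm hF_int (hF_norm ▸ hF_sum.summable)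
  have hseries : ∫ y in Ioi (0 : ℝ), exp (-a * y) / y * besselI1 (y * b)
      = ∫ y in Ioi (0 : ℝ), ∑' k, F k y := by
    refine setIntegral_congr_fun measurableSet_Ioi fun y hy => ?_
    rw [div_mul_eq_mul_div, mul_div_assoc, besselI1_mul_div b (ne_of_gt hy), ← tsum_mul_left]
    refine tsum_congr fun k => ?_
    rw [hF, neg_mul]
    ring
  have hsqrt : √(1 - 4 * x) = √(a ^ 2 - b ^ 2) / a := by
    rw [show 1 - 4 * x = (a ^ 2 - b ^ 2) / a ^ 2 by rw [hx_def]; field_simp,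
      sqrt_div' _ (sq_nonneg a), sqrt_sq ha.le]
  rw [hseries, hint.unique hF_sum, hsqrt, hx_def]
  field_simp
  ring

/-- The MGF of the renewal cycle `C₀`, computed from its density:
`√(λ/μ) ∫₀^∞ (e^{-((λ+μ)/2 - s)y}/y) I₁(y√(λμ)) dy
  = ((λ+μ-2s) - √((λ+μ-2s)² - 4λμ))/(2μ)`. -/
theorem stmt_9 (lam mu s : ℝ) (hmu : 0 < mu) (hlam : mu < lam)
    (hs : s < (Real.sqrt lam - Real.sqrt mu)^2 / 2) :
    Real.sqrt (lam / mu) *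
      ∫ y in Set.Ioi (0:ℝ),
        (Real.exp (-((lam + mu)/2 - s) * y) / y) * besselI1 (y * Real.sqrt (lam * mu))
      = ((lam + mu - 2*s) - Real.sqrt ((lam + mu - 2*s)^2 - 4*lam*mu)) / (2*mu) := by
  have hlam0 : 0 < lam := hmu.trans hlam
  have hsqrt_mul : √(lam * mu) = √lam * √mu := sqrt_mul hlam0.le mu
  have hba : √(lam * mu) < (lam + mu) / 2 - s := by
    have : (√lam - √mu) ^ 2 = lam + mu - 2 * √(lam * mu) := by
      rw [hsqrt_mul, sub_sq, sq_sqrt hlam0.le, sq_sqrt hmu.le]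
      ring
    linarith
  rw [integral_exp_neg_mul_div_mul_besselI1 (by positivity) hba, sq_sqrt (mul_pos hlam0 hmu).le,
    show (lam + mu - 2 * s) ^ 2 - 4 * lam * mu
      = 2 ^ 2 * (((lam + mu) / 2 - s) ^ 2 - lam * mu) by ring,
    sqrt_mul (by norm_num : (0 : ℝ) ≤ 2 ^ 2), sqrt_sq (by norm_num : (0 : ℝ) ≤ 2),
    sqrt_div hlam0.le, hsqrt_mul]
  have hsqrt_mu : 0 < √mu := sqrt_pos.2 hmu
  generalize √(((lam + mu) / 2 - s) ^ 2 - lam * mu) = t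
  field_simp
  rw [sq_sqrt hmu.le]
end

section
/- For λ, μ > 0 and t > 0, the function ψ₀(t) = (λ/(t√(λμ))) e^{-(λ+μ)t} I₁(2t√(λμ)) satisfies ψ₀(t) = λe^{-(λ+μ)t}[1 + √(λμ/t)∫₀^t ((t-y)/√y) I₁(2√(λμty)) dy]. -/
/-!
Write `I₁(2√x) = √x · S(x)` with the entire series `S(x) = ∑ xᵏ / (k! (k+1)!)`. Integrating
termwise, `∫₀ᵗ (t - y) (cty)ᵏ dy = cᵏ t^(2k+2) / ((k+1)(k+2))`, so `c ∫₀ᵗ (t - y) S(cty) dy` is the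
series `S(ct²)` shifted by one index, i.e. `S(ct²) - 1`. Both sides of the identity are then
`λ e^{-(λ+μ)t} S(λμt²)`.
-/

open MeasureTheory

open intervalIntegral Real Nat

noncomputable def besselI1Series (x : ℝ) : ℝ :=
  ∑' k : ℕ, x ^ k / (k ! * (k + 1)! : ℝ)

lemma besselI1_eq (z : ℝ) : besselI1 z = z / 2 * besselI1Series (z ^ 2 / 4) := rfl

lemma besselI1_two_mul_sqrt {x : ℝ} (hx : 0 ≤ x) : besselI1 (2 * √x) = √x * besselI1Series x := by
  rw [besselI1_eq, mul_pow, sq_sqrt hx]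
  ring_nf

lemma summable_besselI1Series (x : ℝ) : Summable fun k : ℕ => x ^ k / (k ! * (k + 1)! : ℝ) := by
  refine Summable.of_norm_bounded (Real.summable_pow_div_factorial |x|) fun k => ?_
  rw [norm_div, norm_pow, Real.norm_eq_abs, Real.norm_of_nonneg (by positivity)]
  gcongr
  exact le_mul_of_one_le_right (by positivity) (one_le_cast.2 (factorial_pos _))

lemma integral_sub_mul_pow (t : ℝ) (k : ℕ) :
    ∫ y in (0 : ℝ)..t, (t - y) * y ^ k = t ^ (k + 2) / ((k + 1) * (k + 2)) := by
  have hsplit : (fun y : ℝ => (t - y) * y ^ k) = fun y => t * y ^ k - y ^ (k + 1) := by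
    ext y; ring
  rw [hsplit, integral_sub ((intervalIntegrable_pow k).const_mul t) (intervalIntegrable_pow _),
    intervalIntegral.integral_const_mul, integral_pow, integral_pow]
  field_simp
  push_cast
  ring

lemma hasSum_integral_sub_mul_besselI1Series (c t : ℝ) :
    HasSum (fun k : ℕ => ∫ y in (0 : ℝ)..t, (t - y) * ((c * t * y) ^ k / (k ! * (k + 1)! : ℝ)))
      (∫ y in (0 : ℝ)..t, (t - y) * besselI1Series (c * t * y)) := by
  refine hasSum_integral_of_dominated_convergence (fun k _ => |t| * ((|c| * t ^ 2) ^ k / k !))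
    (fun k => (by fun_prop : Continuous _).aestronglyMeasurable) (fun k => ?_)
    (.of_forall fun _ _ => (Real.summable_pow_div_factorial _).mul_left _) intervalIntegrable_const
    (.of_forall fun y _ => (summable_besselI1Series _).hasSum.mul_left _)
  refine .of_forall fun y hy => ?_
  have hy' := Set.uIoc_subset_uIcc hy
  have hty : |t - y| ≤ |t| := by simpa using Set.abs_sub_right_of_mem_uIcc hy'
  have hcty : |c * t * y| ≤ |c| * t ^ 2 := by
    have : |y| ≤ |t| := by simpa using Set.abs_sub_left_of_mem_uIcc hy'
    rw [abs_mul, abs_mul, ← sq_abs t, sq, ← mul_assoc]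
    gcongr
  rw [norm_mul, norm_div, norm_pow, Real.norm_eq_abs, Real.norm_eq_abs,
    Real.norm_of_nonneg (by positivity)]
  gcongr
  exact le_mul_of_one_le_right (by positivity) (one_le_cast.2 (factorial_pos _))

lemma besselI1Series_mul_sq (c t : ℝ) :
    besselI1Series (c * t ^ 2) = 1 + c * ∫ y in (0 : ℝ)..t, (t - y) * besselI1Series (c * t * y) := by
  have hterm : ∀ k : ℕ,
      c * ∫ y in (0 : ℝ)..t, (t - y) * ((c * t * y) ^ k / (k ! * (k + 1)! : ℝ))
        = (c * t ^ 2) ^ (k + 1) / ((k + 1)! * (k + 1 + 1)! : ℝ) := by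
    intro k
    have hpull : (fun y => (t - y) * ((c * t * y) ^ k / (k ! * (k + 1)! : ℝ)))
        = fun y => (c * t) ^ k / (k ! * (k + 1)! : ℝ) * ((t - y) * y ^ k) := by
      ext y; rw [mul_pow]; ring
    rw [hpull, intervalIntegral.integral_const_mul, integral_sub_mul_pow]
    push_cast [factorial_succ]
    field_simp
    ring
  have hshift : HasSum (fun k : ℕ => (c * t ^ 2) ^ (k + 1) / ((k + 1)! * (k + 1 + 1)! : ℝ))
      (c * ∫ y in (0 : ℝ)..t, (t - y) * besselI1Series (c * t * y)) := by
    simpa only [hterm] using (hasSum_integral_sub_mul_besselI1Series c t).mul_left c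
  rw [besselI1Series, (summable_besselI1Series _).tsum_eq_zero_add, hshift.tsum_eq]
  simp

/-- The first-passage density `ψ₀(t) = (λ/(t√(λμ))) e^{-(λ+μ)t} I₁(2t√(λμ))` satisfies
`ψ₀(t) = λ e^{-(λ+μ)t} [1 + √(λμ/t) ∫₀^t ((t-y)/√y) I₁(2√(λμty)) dy]`. -/
theorem stmt_10 (lam mu t : ℝ) (hlam : 0 < lam) (hmu : 0 < mu) (ht : 0 < t) :
    (lam / (t * Real.sqrt (lam * mu))) * Real.exp (-(lam + mu) * t) *
      besselI1 (2 * t * Real.sqrt (lam * mu))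
    = lam * Real.exp (-(lam + mu) * t) *
      (1 + Real.sqrt (lam * mu / t) *
        ∫ y in (0:ℝ)..t, ((t - y) / Real.sqrt y) *
          besselI1 (2 * Real.sqrt (lam * mu * t * y))) := by
  set c := lam * mu
  have hc : 0 < c := mul_pos hlam hmu
  have hlhs : besselI1 (2 * t * √c) = t * √c * besselI1Series (c * t ^ 2) := by
    have hroot : √(c * t ^ 2) = t * √c := by rw [sqrt_mul hc.le, sqrt_sq ht.le, mul_comm]
    rw [← hroot, mul_assoc, ← hroot, besselI1_two_mul_sqrt (by positivity)]
  have hint : ∫ y in (0 : ℝ)..t, (t - y) / √y * besselI1 (2 * √(c * t * y))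
      = √(c * t) * ∫ y in (0 : ℝ)..t, (t - y) * besselI1Series (c * t * y) := by
    -- the integrands differ at `y = 0`, where `(t - y) / √y` is the junk value `0`
    rw [← intervalIntegral.integral_const_mul, integral_of_le ht.le, integral_of_le ht.le]
    refine setIntegral_congr_fun measurableSet_Ioc fun y hy => ?_
    rw [besselI1_two_mul_sqrt (by have := hy.1; positivity), sqrt_mul (by positivity) y]
    field_simp [(sqrt_pos.2 hy.1).ne']
  have hroots : √(c / t) * √(c * t) = c := by
    rw [← sqrt_mul (by positivity), show c / t * (c * t) = c ^ 2 by field_simp, sqrt_sq hc.le]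
  rw [hlhs, hint, ← mul_assoc (√(c / t)), hroots, ← besselI1Series_mul_sq]
  field_simp
end

section
/- For 0 < μ < λ, the density ψ₀(t) = (λ/(t√(λμ))) e^{-(λ+μ)t} I₁(2t√(λμ)) integrates to 1 over (0,∞): ∫₀^∞ ψ₀(t) dt = 1. -/
/-!
Expanding `I₁` in its power series, the integrand becomes
`λ e^{-(λ+μ)t} ∑ₖ (λμ)ᵏ t^{2k} / (k! (k+1)!)`. Integrating term by term with
`∫₀^∞ t^{2k} e^{-rt} dt = (2k)! / r^{2k+1}` and using `(2k)! = Cₖ k! (k+1)!` turns the integral into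
`λ/(λ+μ) · C(x)`, where `C(x) = ∑ₖ Cₖ xᵏ` is the Catalan generating function and
`x = λμ/(λ+μ)² < 1/4`. From `C = 1 + x C²`, `C(x)` is one of the two roots `(λ+μ)/λ` and
`(λ+μ)/μ > 2`; it is the smaller one because `C` is continuous on `[0, x]`, starts at `C(0) = 1`
and never takes the value `2` (that would force `x = 1/4`).
-/

open MeasureTheory

open Real Set

lemma catalan_le_four_pow (n : ℕ) : catalan n ≤ 4 ^ n :=
  calc catalan n ≤ (n + 1) * catalan n := Nat.le_mul_of_pos_left _ n.succ_pos
    _ = n.centralBinom := succ_mul_catalan_eq_centralBinom n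
    _ ≤ 4 ^ n := Nat.centralBinom_le_four_pow n

lemma catalan_mul_factorial_mul_factorial (k : ℕ) :
    catalan k * (k.factorial * (k + 1).factorial) = (2 * k).factorial := by
  rw [← Nat.choose_mul_factorial_mul_factorial (show k ≤ 2 * k by omega),
    show 2 * k - k = k by omega, ← Nat.centralBinom_eq_two_mul_choose,
    ← succ_mul_catalan_eq_centralBinom, Nat.factorial_succ]
  ring

noncomputable def catalanGF (x : ℝ) : ℝ := ∑' k, (catalan k : ℝ) * x ^ k

lemma summable_norm_catalan_mul_pow {x : ℝ} (hx : |x| < 1 / 4) :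
    Summable fun k => ‖(catalan k : ℝ) * x ^ k‖ := by
  refine Summable.of_nonneg_of_le (fun k => norm_nonneg _) (fun k => ?_)
    (summable_geometric_of_lt_one (by positivity) (by linarith) (r := 4 * |x|))
  rw [norm_mul, norm_pow, Real.norm_natCast, Real.norm_eq_abs, mul_pow]
  gcongr
  exact_mod_cast catalan_le_four_pow k

lemma catalanGF_eq_one_add_mul_sq {x : ℝ} (hx : |x| < 1 / 4) :
    catalanGF x = 1 + x * catalanGF x ^ 2 := by
  have hs := summable_norm_catalan_mul_pow hx
  have hsq : catalanGF x ^ 2 = ∑' n, (catalan (n + 1) : ℝ) * x ^ n := by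
    rw [catalanGF, sq, tsum_mul_tsum_eq_tsum_sum_antidiagonal_of_summable_norm hs hs]
    refine tsum_congr fun n => ?_
    rw [catalan_succ', Nat.cast_sum, Finset.sum_mul]
    refine Finset.sum_congr rfl fun kl hkl => ?_
    rw [← Finset.HasAntidiagonal.mem_antidiagonal.1 hkl, pow_add]
    push_cast
    ring
  rw [hsq, ← tsum_mul_left, catalanGF, hs.of_norm.tsum_eq_zero_add]
  simp only [catalan_zero, Nat.cast_one, pow_zero, mul_one, pow_succ]
  congr 1
  exact tsum_congr fun n => by ring

@[simp]
lemma catalanGF_zero : catalanGF 0 = 1 := by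
  rw [catalanGF, tsum_eq_single 0 fun k hk => by simp [hk]]
  simp

lemma continuousOn_catalanGF {r : ℝ} (hr0 : 0 ≤ r) (hr : r < 1 / 4) :
    ContinuousOn catalanGF (Icc 0 r) := by
  refine continuousOn_tsum (fun k => by fun_prop)
    (summable_norm_catalan_mul_pow (x := r) (by rwa [abs_of_nonneg hr0])) fun k y hy => ?_
  rw [norm_mul, norm_mul, norm_pow, norm_pow, Real.norm_of_nonneg hy.1, Real.norm_of_nonneg hr0]
  gcongr
  exacts [hy.1, hy.2]

lemma catalanGF_lt_two {x : ℝ} (hx0 : 0 ≤ x) (hx : x < 1 / 4) : catalanGF x < 2 := by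
  have hne : ∀ y ∈ Icc 0 x, catalanGF y ≠ 2 := by
    intro y hy h2
    have := catalanGF_eq_one_add_mul_sq (x := y) (by rw [abs_of_nonneg hy.1]; linarith [hy.2])
    rw [h2] at this
    linarith [hy.2]
  by_contra! hge
  obtain ⟨y, hy, hy2⟩ : (2 : ℝ) ∈ catalanGF '' Icc 0 x := by
    refine intermediate_value_Icc hx0 (continuousOn_catalanGF hx0 hx) ⟨?_, hge⟩
    simp
  exact hne y hy hy2

lemma sqrt_one_sub_four_mul {x : ℝ} (hx0 : 0 ≤ x) (hx : x < 1 / 4) :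
    √(1 - 4 * x) = 1 - 2 * x * catalanGF x := by
  have heq := catalanGF_eq_one_add_mul_sq (x := x) (by rw [abs_of_nonneg hx0]; linarith)
  have hlt := catalanGF_lt_two hx0 hx
  rw [sqrt_eq_iff_mul_self_eq_of_pos (by nlinarith)]
  linear_combination (-4 * x) * heq

lemma integral_pow_mul_exp_neg_mul (n : ℕ) {r : ℝ} (hr : 0 < r) :
    ∫ t in Ioi (0 : ℝ), t ^ n * exp (-(r * t)) = n.factorial / r ^ (n + 1) := by
  have h := integral_rpow_mul_exp_neg_mul_Ioi (a := n + 1) (by positivity) hr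
  simp only [add_sub_cancel_right, rpow_natCast] at h
  rw [h, Gamma_nat_eq_factorial, ← Nat.cast_add_one, rpow_natCast, one_div, inv_pow]
  ring

lemma integrableOn_pow_mul_exp_neg_mul (n : ℕ) {r : ℝ} (hr : 0 < r) :
    IntegrableOn (fun t => t ^ n * exp (-(r * t))) (Ioi 0) :=
  Integrable.of_integral_ne_zero (by rw [integral_pow_mul_exp_neg_mul n hr]; positivity)

theorem integral_tsum_mul_pow_mul_exp_neg_mul {c : ℕ → ℝ} {n : ℕ → ℕ} {r : ℝ} (hr : 0 < r)
    (hc : Summable fun k => |c k| * (n k).factorial / r ^ (n k + 1)) :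
    ∫ t in Ioi (0 : ℝ), (∑' k, c k * t ^ n k) * exp (-(r * t)) =
      ∑' k, c k * (n k).factorial / r ^ (n k + 1) := by
  have hint k := (integrableOn_pow_mul_exp_neg_mul (n k) hr).const_mul (c k)
  have hnorm k : ∫ t in Ioi (0 : ℝ), ‖c k * (t ^ n k * exp (-(r * t)))‖ =
      |c k| * (n k).factorial / r ^ (n k + 1) := by
    rw [setIntegral_congr_fun measurableSet_Ioi fun t (ht : 0 < t) => by
      rw [norm_mul, Real.norm_eq_abs, Real.norm_of_nonneg (by positivity)],
      integral_const_mul, integral_pow_mul_exp_neg_mul _ hr, mul_div_assoc]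
  simp_rw [← tsum_mul_right, mul_assoc]
  rw [← integral_tsum_of_summable_integral_norm hint (by simpa only [hnorm] using hc)]
  simp_rw [integral_const_mul, integral_pow_mul_exp_neg_mul _ hr, mul_div_assoc]

lemma mul_div_add_sq_lt_one_div_four {a b : ℝ} (hab : a ≠ b) (h : a + b ≠ 0) :
    a * b / (a + b) ^ 2 < 1 / 4 := by
  rw [div_lt_div_iff₀ (by positivity) (by norm_num)]
  nlinarith [sq_pos_of_ne_zero (sub_ne_zero.2 hab)]

lemma catalanGF_mul_div_add_sq {a b : ℝ} (hb : 0 < b) (hab : b < a) :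
    catalanGF (a * b / (a + b) ^ 2) = (a + b) / a := by
  have ha : 0 < a := hb.trans hab
  have hx := mul_div_add_sq_lt_one_div_four hab.ne' (by positivity)
  have hsqrt : √(1 - 4 * (a * b / (a + b) ^ 2)) = (a - b) / (a + b) := by
    rw [sqrt_eq_iff_mul_self_eq_of_pos (div_pos (by linarith) (by positivity))]
    field_simp
    ring
  have h := sqrt_one_sub_four_mul (by positivity) hx
  rw [hsqrt] at h
  field_simp at h ⊢
  refine mul_left_cancel₀ (mul_ne_zero two_ne_zero hb.ne') ?_
  linear_combination h

lemma besselI1_two_mul_mul_sqrt (t : ℝ) {a : ℝ} (ha : 0 ≤ a) :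
    besselI1 (2 * t * √a) =
      t * √a * ∑' k : ℕ, a ^ k / (k.factorial * (k + 1).factorial) * t ^ (2 * k) := by
  have hz : (2 * t * √a) ^ 2 / 4 = a * t ^ 2 := by
    rw [mul_pow, sq_sqrt ha]; ring
  rw [besselI1, hz]
  congr 1
  · ring
  · exact tsum_congr fun k => by rw [mul_pow, pow_mul]; ring

lemma div_mul_exp_mul_besselI1_eq_tsum (c r : ℝ) {a t : ℝ} (ha : 0 < a) (ht : 0 < t) :
    c / (t * √a) * exp (-r * t) * besselI1 (2 * t * √a) =
      (∑' k : ℕ, c * a ^ k / (k.factorial * (k + 1).factorial) * t ^ (2 * k)) *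
        exp (-(r * t)) := by
  have hsqrt : 0 < √a := sqrt_pos.2 ha
  rw [besselI1_two_mul_mul_sqrt t ha.le, ← tsum_mul_left, ← tsum_mul_left, ← tsum_mul_right]
  refine tsum_congr fun k => ?_
  field_simp

lemma integral_besselI1_series_mul_exp_neg_mul (c : ℝ) {a r : ℝ} (ha : 0 ≤ a) (hr : 0 < r)
    (hx : a / r ^ 2 < 1 / 4) :
    ∫ t in Ioi (0 : ℝ),
      (∑' k : ℕ, c * a ^ k / (k.factorial * (k + 1).factorial) * t ^ (2 * k)) *
        exp (-(r * t)) = c / r * catalanGF (a / r ^ 2) := by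
  have hcoef (c : ℝ) (k : ℕ) : c * a ^ k / (k.factorial * (k + 1).factorial) *
      (2 * k).factorial / r ^ (2 * k + 1) = c / r * ((catalan k : ℝ) * (a / r ^ 2) ^ k) := by
    rw [← catalan_mul_factorial_mul_factorial k, div_pow, ← pow_mul, pow_succ]
    push_cast
    field_simp
  have hsum := summable_norm_catalan_mul_pow (x := a / r ^ 2)
    (by rwa [abs_of_nonneg (by positivity)])
  rw [integral_tsum_mul_pow_mul_exp_neg_mul hr, tsum_congr (hcoef c), tsum_mul_left, catalanGF]
  refine (hsum.of_norm.mul_left (|c| / r)).congr fun k => ?_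
  rw [abs_div, abs_mul, abs_of_nonneg (by positivity : 0 ≤ a ^ k),
    abs_of_nonneg (by positivity : (0 : ℝ) ≤ k.factorial * (k + 1).factorial), hcoef]

/-- For `0 < μ < λ`, the first-passage density
`ψ₀(t) = (λ/(t√(λμ))) e^{-(λ+μ)t} I₁(2t√(λμ))` integrates to 1 over `(0,∞)`. -/
theorem stmt_11 (lam mu : ℝ) (hmu : 0 < mu) (hlam : mu < lam) :
    ∫ t in Set.Ioi (0:ℝ),
      (lam / (t * Real.sqrt (lam * mu))) * Real.exp (-(lam + mu) * t) *
        besselI1 (2 * t * Real.sqrt (lam * mu)) = 1 := by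
  have hlam0 : 0 < lam := hmu.trans hlam
  have hx := mul_div_add_sq_lt_one_div_four hlam.ne' (by positivity)
  rw [setIntegral_congr_fun measurableSet_Ioi fun t (ht : 0 < t) =>
      div_mul_exp_mul_besselI1_eq_tsum lam (lam + mu) (by positivity) ht,
    integral_besselI1_series_mul_exp_neg_mul lam (by positivity) (by positivity) hx,
    catalanGF_mul_div_add_sq hmu hlam, div_mul_div_cancel₀ (by positivity), div_self hlam0.ne']
end

section
/- For 0 < μ < λ, x ≥ 0, and 0 < α < 1, the first derivative at 0 of M_{A_x}(s) = 2αλ·exp((x/2)[λ-μ-√((λ+μ-2s)²-4λμ)]) / (2λ(α-1)+(λ+μ-2s)+√((λ+μ-2s)²-4λμ)) equals (2 + α(λ+μ)x)/(α(λ-μ)), i.e. E[A_x] = (2+α(λ+μ)x)/(α(λ-μ)). -/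
/-!
At `s = 0` the discriminant `(λ + μ - 2s)² - 4λμ` equals `(λ - μ)² > 0`, so its square root is
differentiable there with value `λ - μ`; numerator and denominator of `M_{A_x}` both take the value
`2αλ` at `0`, and the quotient rule reduces the derivative to the difference of their derivatives
divided by `2αλ`.
-/

open Real

lemma hasDerivAt_const_sub_two_mul (c t : ℝ) : HasDerivAt (fun s : ℝ => c - 2 * s) (-2) t := by
  simpa using ((hasDerivAt_id t).const_mul 2).const_sub c

lemma discriminant_zero (lam mu : ℝ) :
    (lam + mu - 2 * 0) ^ 2 - 4 * lam * mu = (lam - mu) ^ 2 := by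
  ring

lemma sqrt_discriminant_zero {lam mu : ℝ} (h : mu ≤ lam) :
    √((lam + mu - 2 * 0) ^ 2 - 4 * lam * mu) = lam - mu := by
  rw [discriminant_zero]
  exact sqrt_sq (sub_nonneg.2 h)

lemma hasDerivAt_sqrt_discriminant_zero {lam mu : ℝ} (h : mu < lam) :
    HasDerivAt (fun s : ℝ => √((lam + mu - 2 * s) ^ 2 - 4 * lam * mu))
      (-2 * (lam + mu) / (lam - mu)) 0 := by
  have hlm : 0 < lam - mu := sub_pos.2 h
  have hlin := hasDerivAt_const_sub_two_mul (lam + mu) 0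
  have hdisc : HasDerivAt (fun s : ℝ => (lam + mu - 2 * s) ^ 2 - 4 * lam * mu)
      (2 * (lam + mu - 2 * 0) * (-2)) 0 := by
    simpa using (hlin.pow 2).sub_const (4 * lam * mu)
  have hpos : (lam + mu - 2 * 0) ^ 2 - 4 * lam * mu ≠ 0 := by
    rw [discriminant_zero]
    positivity
  convert hdisc.sqrt hpos using 1
  rw [sqrt_discriminant_zero h.le]
  field_simp
  ring

lemma hasDerivAt_absorptionMGF_zero {lam mu x α g' : ℝ} {g : ℝ → ℝ} (hg : HasDerivAt g g' 0)
    (hg0 : g 0 = lam - mu) (hα : α ≠ 0) (hlam : lam ≠ 0) :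
    HasDerivAt (fun s : ℝ =>
      2 * α * lam * exp ((x / 2) * (lam - mu - g s)) /
        (2 * lam * (α - 1) + (lam + mu - 2 * s) + g s))
      ((2 - g' - α * lam * x * g') / (2 * α * lam)) 0 := by
  have hlin := hasDerivAt_const_sub_two_mul (lam + mu) 0
  have hnum := (((hg.const_sub (lam - mu)).const_mul (x / 2)).exp).const_mul (2 * α * lam)
  have hden : HasDerivAt (fun s : ℝ => 2 * lam * (α - 1) + (lam + mu - 2 * s) + g s) (-2 + g') 0 :=
    (hlin.const_add (2 * lam * (α - 1))).add hg
  have hden0 : 2 * lam * (α - 1) + (lam + mu - 2 * 0) + g 0 = 2 * α * lam := by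
    rw [hg0]; ring
  refine (hnum.div hden (by rw [hden0]; simp [hα, hlam])).congr_deriv ?_
  rw [hden0, hg0, sub_self, mul_zero, exp_zero]
  field_simp
  ring

theorem stmt_17_general (lam mu x α : ℝ) (hmu : 0 < mu) (hlam : mu < lam)
    (hα0 : 0 < α) :
    deriv (fun s : ℝ =>
      2*α*lam * Real.exp ((x/2) * (lam - mu - Real.sqrt ((lam + mu - 2*s)^2 - 4*lam*mu))) /
        (2*lam*(α-1) + (lam + mu - 2*s) + Real.sqrt ((lam + mu - 2*s)^2 - 4*lam*mu))) 0
      = (2 + α*(lam + mu)*x) / (α * (lam - mu)) := by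
  have hlam0 : lam ≠ 0 := (hmu.trans hlam).ne'
  have hlm : lam - mu ≠ 0 := (sub_pos.2 hlam).ne'
  rw [(hasDerivAt_absorptionMGF_zero (hasDerivAt_sqrt_discriminant_zero hlam)
    (sqrt_discriminant_zero hlam.le) hα0.ne' hlam0).deriv]
  field_simp
  ring

/-- The derivative at `0` of the MGF of the absorption time `A_x` equals
`(2 + α(λ+μ)x)/(α(λ-μ))`, i.e. `E[A_x] = (2 + α(λ+μ)x)/(α(λ-μ))`. -/
theorem stmt_17 (lam mu x α : ℝ) (hmu : 0 < mu) (hlam : mu < lam) (hx : 0 ≤ x)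
    (hα0 : 0 < α) (hα1 : α < 1) :
    deriv (fun s : ℝ =>
      2*α*lam * Real.exp ((x/2) * (lam - mu - Real.sqrt ((lam + mu - 2*s)^2 - 4*lam*mu))) /
        (2*lam*(α-1) + (lam + mu - 2*s) + Real.sqrt ((lam + mu - 2*s)^2 - 4*lam*mu))) 0
      = (2 + α*(lam + mu)*x) / (α * (lam - mu)) :=
  stmt_17_general lam mu x α hmu hlam hα0
end
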